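/- In the set-disjointness lower-bound graph G, if a_i = b_j (the two ℓ-bit strings coincide), then dist_G(u_i, v_j) = 3. -/

import Mathlib

namespace SetDisjointness

/-- Vertices of the set-disjointness lower-bound graph:
`uA i`, `vB j`, `wC m`, `xD m`, and the two special vertices `u*`, `v*`. -/
abbrev Vert (α β ℓ : ℕ) := (Fin α ⊕ Fin β) ⊕ ((Fin ℓ ⊕ Fin ℓ) ⊕ Bool)

variable {α β ℓ : ℕ}

def uA (i : Fin α) : Vert α β ℓ := Sum.inl (Sum.inl i)
def vB (j : Fin β) : Vert α β ℓ := Sum.inl (Sum.inr j)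
def wC (m : Fin ℓ) : Vert α β ℓ := Sum.inr (Sum.inl (Sum.inl m))
def xD (m : Fin ℓ) : Vert α β ℓ := Sum.inr (Sum.inl (Sum.inr m))
def ustar : Vert α β ℓ := Sum.inr (Sum.inr false)
def vstar : Vert α β ℓ := Sum.inr (Sum.inr true)

/-- One direction of the edge relation of the set-disjointness lower-bound graph:
`u_i ~ w_m` iff the `m`-th bit of `a_i` is 1; `u_i ~ x_m` iff it is 0;
`v_j ~ w_m` iff the `m`-th bit of `b_j` is 0; `v_j ~ x_m` iff it is 1;
`u*` is adjacent to all of `V_A ∪ V_C ∪ V_D`; `v*` to all of `V_B ∪ V_C ∪ V_D`. -/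
def sdRel (a : Fin α → Fin ℓ → Bool) (b : Fin β → Fin ℓ → Bool) :
    Vert α β ℓ → Vert α β ℓ → Prop
  | Sum.inl (Sum.inl i), Sum.inr (Sum.inl (Sum.inl m)) => a i m = true
  | Sum.inl (Sum.inl i), Sum.inr (Sum.inl (Sum.inr m)) => a i m = false
  | Sum.inl (Sum.inr j), Sum.inr (Sum.inl (Sum.inl m)) => b j m = false
  | Sum.inl (Sum.inr j), Sum.inr (Sum.inl (Sum.inr m)) => b j m = true
  | Sum.inr (Sum.inr false), Sum.inl (Sum.inl _) => True
  | Sum.inr (Sum.inr false), Sum.inr (Sum.inl _) => True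
  | Sum.inr (Sum.inr true), Sum.inl (Sum.inr _) => True
  | Sum.inr (Sum.inr true), Sum.inr (Sum.inl _) => True
  | _, _ => False

/-- The set-disjointness lower-bound graph. -/
def SDGraph (a : Fin α → Fin ℓ → Bool) (b : Fin β → Fin ℓ → Bool) :
    SimpleGraph (Vert α β ℓ) :=
  SimpleGraph.fromRel (sdRel a b)

theorem _root_.SimpleGraph.dist_eq_three_of_walk {V : Type*} {G : SimpleGraph V} {u v : V}
    (p : G.Walk u v) (hp : p.length = 3) (hne : u ≠ v) (hadj : ¬G.Adj u v)
    (hcommon : G.commonNeighbors u v = ∅) : G.dist u v = 3 := by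
  have hlt : 2 < G.edist u v := SimpleGraph.two_lt_edist_iff.mpr ⟨hne, hadj, hcommon⟩
  rw [← p.reachable.coe_dist_eq_edist] at hlt
  exact le_antisymm (hp ▸ SimpleGraph.dist_le p) (by exact_mod_cast hlt)

section

variable {a : Fin α → Fin ℓ → Bool} {b : Fin β → Fin ℓ → Bool}

theorem sdGraph_adj {x y : Vert α β ℓ} :
    (SDGraph a b).Adj x y ↔ x ≠ y ∧ (sdRel a b x y ∨ sdRel a b y x) :=
  SimpleGraph.fromRel_adj _ _ _

theorem uA_ne_vB (i : Fin α) (j : Fin β) : (uA i : Vert α β ℓ) ≠ vB j := by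
  simp [uA, vB]

theorem not_adj_uA_vB (i : Fin α) (j : Fin β) : ¬(SDGraph a b).Adj (uA i) (vB j) := by
  simp [sdGraph_adj, sdRel, uA, vB]

/-- A common neighbour of `u_i` and `v_j` lies in `V_C ∪ V_D`, and `w_m` (resp. `x_m`) is one
exactly when `a_i` and `b_j` differ in bit `m`. -/
theorem commonNeighbors_uA_vB_eq_empty {i : Fin α} {j : Fin β} (h : a i = b j) :
    (SDGraph a b).commonNeighbors (uA i) (vB j) = ∅ := by
  ext c
  simp only [SimpleGraph.mem_commonNeighbors, Set.mem_empty_iff_false, iff_false, not_and]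
  rcases c with (_ | _) | ((m | m) | (_ | _)) <;>
    simp [sdGraph_adj, sdRel, uA, vB, h]

theorem exists_adj_uA_adj_vstar (i : Fin α) (m : Fin ℓ) :
    ∃ c, (SDGraph a b).Adj (uA i) c ∧ (SDGraph a b).Adj c vstar := by
  cases h : a i m
  · exact ⟨xD m, by simp [sdGraph_adj, sdRel, uA, xD, vstar, h]⟩
  · exact ⟨wC m, by simp [sdGraph_adj, sdRel, uA, wC, vstar, h]⟩

theorem adj_vstar_vB (j : Fin β) : (SDGraph a b).Adj vstar (vB j) := by
  simp [sdGraph_adj, sdRel, vstar, vB]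

end

/-- If the bit strings `a_i` and `b_j` coincide, then `dist_G(u_i, v_j) = 3`. -/
theorem sd_dist_eq_three (hl : 1 ≤ ℓ) (a : Fin α → Fin ℓ → Bool)
    (b : Fin β → Fin ℓ → Bool) (i : Fin α) (j : Fin β) (hij : a i = b j) :
    (SDGraph a b).dist (uA i) (vB j) = 3 := by
  obtain ⟨c, hu, hc⟩ := exists_adj_uA_adj_vstar (b := b) i ⟨0, hl⟩
  exact SimpleGraph.dist_eq_three_of_walk (.cons hu (.cons hc (.cons (adj_vstar_vB j) .nil))) rfl
    (uA_ne_vB i j) (not_adj_uA_vB i j) (commonNeighbors_uA_vB_eq_empty hij)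

end SetDisjointness
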